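/- arXiv:2410.21654 — 4 statements merged into one kernel-verified Lean document; each statement's English description precedes it below -/
import Mathlib

section
/- Let A be a quasitriangular bialgebra over a field F with R-matrix R, let (ψ, J) be a twist pair for A, and let K be an invertible element of A satisfying Δ(K) = J⁻¹·(1⊗K)·R^ψ·(K⊗1). Then the generalized reflection equation holds in A⊗A: (K⊗1)·(R^ψ)₂₁·(1⊗K)·R = ((ψ⊗ψ)(R))₂₁·(1⊗K)·R^ψ·(K⊗1). -/
open TensorProduct

noncomputable section

variable (F : Type*) [Field F]

section BialgDefs

variable (A : Type*) [Ring A] [Bialgebra F A]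

/-- Conjugation by an invertible element, as an algebra automorphism. -/
def conjEquiv (g gi : A) (h1 : g * gi = 1) (h2 : gi * g = 1) : A ≃ₐ[F] A where
  toFun a := g * a * gi
  invFun a := gi * a * g
  left_inv a := by simp only [← mul_assoc]; rw [h2, one_mul, mul_assoc, h2, mul_one]
  right_inv a := by simp only [← mul_assoc]; rw [h1, one_mul, mul_assoc, h1, mul_one]
  map_mul' a b := by
    show g * (a * b) * gi = (g * a * gi) * (g * b * gi)
    simp only [mul_assoc]; rw [← mul_assoc gi g, h2, one_mul]
  map_add' a b := by
    show g * (a + b) * gi = g * a * gi + g * b * gi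
    rw [mul_add, add_mul]
  commutes' r := by
    show g * algebraMap F A r * gi = algebraMap F A r
    rw [← Algebra.commutes r g, mul_assoc, h1, mul_one]

/-- The coproduct of `A`, as an algebra map. -/
def cop : A →ₐ[F] A ⊗[F] A := Bialgebra.comulAlgHom F A

/-- The flip of the two tensor legs. -/
def flipT : (A ⊗[F] A) ≃ₐ[F] A ⊗[F] A := Algebra.TensorProduct.comm F A A

/-- The opposite coproduct. -/
def copOp : A →ₐ[F] A ⊗[F] A := (flipT F A).toAlgHom.comp (cop F A)

/-- `X ↦ X₁₂` on triple tensors. -/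
def i12 : (A ⊗[F] A) →ₐ[F] A ⊗[F] (A ⊗[F] A) :=
  Algebra.TensorProduct.map (AlgHom.id F A) Algebra.TensorProduct.includeLeft

/-- `X ↦ X₁₃` on triple tensors. -/
def i13 : (A ⊗[F] A) →ₐ[F] A ⊗[F] (A ⊗[F] A) :=
  Algebra.TensorProduct.map (AlgHom.id F A) Algebra.TensorProduct.includeRight

/-- `X ↦ X₂₃` on triple tensors. -/
def i23 : (A ⊗[F] A) →ₐ[F] A ⊗[F] (A ⊗[F] A) :=
  Algebra.TensorProduct.includeRight

/-- `Δ ⊗ id` landing in `A ⊗ (A ⊗ A)`. -/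
def cop12 : (A ⊗[F] A) →ₐ[F] A ⊗[F] (A ⊗[F] A) :=
  (Algebra.TensorProduct.assoc F F F A A A).toAlgHom.comp
    (Algebra.TensorProduct.map (cop F A) (AlgHom.id F A))

/-- `id ⊗ Δ`. -/
def cop23 : (A ⊗[F] A) →ₐ[F] A ⊗[F] (A ⊗[F] A) :=
  Algebra.TensorProduct.map (AlgHom.id F A) (cop F A)

/-- `ε ⊗ id`. -/
def counit2l : (A ⊗[F] A) →ₐ[F] A :=
  (Algebra.TensorProduct.lid F A).toAlgHom.comp
    (Algebra.TensorProduct.map (Bialgebra.counitAlgHom F A) (AlgHom.id F A))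

/-- `id ⊗ ε`. -/
def counit2r : (A ⊗[F] A) →ₐ[F] A :=
  (Algebra.TensorProduct.rid F F A).toAlgHom.comp
    (Algebra.TensorProduct.map (AlgHom.id F A) (Bialgebra.counitAlgHom F A))

/-- `ψ ⊗ φ` on `A ⊗ A`. -/
def mapT (ψ φ : A →ₐ[F] A) : (A ⊗[F] A) →ₐ[F] A ⊗[F] A := Algebra.TensorProduct.map ψ φ

/-- `R^ψ = (ψ ⊗ id)(R)`. -/
def rpsi (R : A ⊗[F] A) (ψ : A ≃ₐ[F] A) : A ⊗[F] A :=
  Algebra.TensorProduct.map ψ.toAlgHom (AlgHom.id F A) R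

/-- `A` is quasitriangular with R-matrix `R` (with inverse `Ri`). -/
structure IsQT (R Ri : A ⊗[F] A) : Prop where
  mulInv : R * Ri = 1
  invMul : Ri * R = 1
  intw : ∀ a : A, R * cop F A a * Ri = copOp F A a
  copL : cop12 F A R = i13 F A R * i23 F A R
  copR : cop23 F A R = i13 F A R * i12 F A R

/-- `(ψ, J)` is a twist pair (with `Ji` the inverse of `J`). -/
structure IsTwistPair (R Ri J Ji : A ⊗[F] A) (ψ : A ≃ₐ[F] A) : Prop where
  mulInv : J * Ji = 1
  invMul : Ji * J = 1
  cocycle : i12 F A J * cop12 F A J = i23 F A J * cop23 F A J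
  counitL : counit2l F A J = 1
  counitR : counit2r F A J = 1
  intw : ∀ a : A,
    mapT F A ψ.toAlgHom ψ.toAlgHom (copOp F A (ψ.symm a)) = J * cop F A a * Ji
  rrel : flipT F A (mapT F A ψ.toAlgHom ψ.toAlgHom R) = flipT F A J * R * Ji

/-- The image of `s ⊗ A` inside `A ⊗ A`, for a subset `s ⊆ A`. -/
def legSpan (s : Set A) : Submodule F (A ⊗[F] A) :=
  Submodule.span F {x : A ⊗[F] A | ∃ b ∈ s, ∃ a : A, x = b ⊗ₜ[F] a}

/-- `B` is a right coideal subalgebra of `A`. -/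
def IsRightCoideal (B : Subalgebra F A) : Prop :=
  ∀ b ∈ B, cop F A b ∈ legSpan F A (B : Set A)

/-- The tensor K-matrix `𝕂 = (R^ψ)₂₁ ⬝ (1 ⊗ K) ⬝ R`. -/
def tenK (R : A ⊗[F] A) (ψ : A ≃ₐ[F] A) (K : A) : A ⊗[F] A :=
  flipT F A (rpsi F A R ψ) * ((1 : A) ⊗ₜ[F] K) * R

/-- `(ψ, J, K)` is a cylindrical structure on `(A, B)`. -/
structure IsCylindrical (R Ri : A ⊗[F] A) (B : Subalgebra F A) (J Ji : A ⊗[F] A)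
    (ψ : A ≃ₐ[F] A) (K Kinv : A) : Prop where
  twist : IsTwistPair F A R Ri J Ji ψ
  kMulInv : K * Kinv = 1
  kInvMul : Kinv * K = 1
  intwB : ∀ b ∈ B, K * b * Kinv = ψ b
  support : tenK F A R ψ K ∈ legSpan F A (B : Set A)
  copK : cop F A K = Ji * (((1 : A) ⊗ₜ[F] K) * (rpsi F A R ψ * (K ⊗ₜ[F] (1 : A))))

end BialgDefs

section ModuleDefs

variable (A : Type*) [Ring A] [Bialgebra F A]

/-- Right partial transpose on `End V ⊗ End W`. -/
def pt2 (V W : Type*) [AddCommGroup V] [Module F V] [AddCommGroup W] [Module F W] :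
    (Module.End F V ⊗[F] Module.End F W) →ₗ[F]
      (Module.End F V ⊗[F] Module.End F (Module.Dual F W)) :=
  TensorProduct.map LinearMap.id (Module.Dual.transpose (R := F) (M := W) (M' := W))

/-- Identification `End V ⊗ End (W^∨∨) ≃ End V ⊗ End W` via the canonical iso `W ≅ W^∨∨`. -/
def ddIdent (V W : Type*) [AddCommGroup V] [Module F V] [AddCommGroup W] [Module F W]
    [FiniteDimensional F W] :
    (Module.End F V ⊗[F] Module.End F (Module.Dual F (Module.Dual F W))) →ₗ[F]
      (Module.End F V ⊗[F] Module.End F W) :=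
  TensorProduct.map LinearMap.id ((Module.evalEquiv F W).conj.symm).toLinearMap

/-- The right partial trace `A ⊗ End V → A`. -/
def trace2 (V : Type*) [AddCommGroup V] [Module F V] :
    (A ⊗[F] Module.End F V) →ₗ[F] A :=
  (TensorProduct.rid F A).toLinearMap.comp
    (TensorProduct.map LinearMap.id (LinearMap.trace F V))

/-- `T_{•,V}`: act with the second leg on `V`. -/
def actRight (V : Type*) [AddCommGroup V] [Module F V] (ρV : A →ₐ[F] Module.End F V) :
    (A ⊗[F] A) →ₐ[F] A ⊗[F] Module.End F V :=
  Algebra.TensorProduct.map (AlgHom.id F A) ρV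

/-- The boundary transfer matrix `Tr₂(𝕂₍•,V₎)`. -/
def transfer (V : Type*) [AddCommGroup V] [Module F V] (ρV : A →ₐ[F] Module.End F V)
    (T : A ⊗[F] A) : A :=
  trace2 F A V (actRight F A V ρV T)

/-- The module structure on `V ⊗ W` obtained from `Δ`. -/
def tensorRep (V W : Type*) [AddCommGroup V] [Module F V] [AddCommGroup W] [Module F W]
    (ρV : A →ₐ[F] Module.End F V) (ρW : A →ₐ[F] Module.End F W) :
    A →ₐ[F] Module.End F (V ⊗[F] W) :=
  (Module.endTensorEndAlgHom (R := F) (S := F) (A := F) (M := V) (N := W)).comp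
    ((Algebra.TensorProduct.map ρV ρW).comp (cop F A))

/-- `g` (with inverse `gi`) is a boundary gauge transformation for the twist pair `(ψ, J)`. -/
def IsBoundaryGauge (R J : A ⊗[F] A) (ψ : A ≃ₐ[F] A) (g gi : A)
    (hg1 : g * gi = 1) (hg2 : gi * g = 1) : Prop :=
  ∀ (V W : Type) [AddCommGroup V] [Module F V] [FiniteDimensional F V]
    [AddCommGroup W] [Module F W] [FiniteDimensional F W]
    (ρV : A →ₐ[F] Module.End F V) (ρW : A →ₐ[F] Module.End F W),
    let X := pt2 F V W
      ((Algebra.TensorProduct.map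
        (ρV.comp (ψ.trans (conjEquiv F A g gi hg1 hg2)).toAlgHom) ρW) R)
    IsUnit X ∧ IsUnit (pt2 F V (Module.Dual F W) (Ring.inverse X)) ∧
      (Algebra.TensorProduct.map ρV ρW) ((g ⊗ₜ[F] g) * J * cop F A gi) =
        ddIdent F V W (Ring.inverse (pt2 F V (Module.Dual F W) (Ring.inverse X)))

end ModuleDefs

section ReflectionEquation

variable {F} {A : Type*} [Ring A] [Bialgebra F A]

theorem copOp_apply (a : A) : copOp F A a = flipT F A (cop F A a) := rfl

theorem flipT_tmul (a b : A) : flipT F A (a ⊗ₜ[F] b) = b ⊗ₜ[F] a := rfl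

theorem IsQT.mul_cop {R Ri : A ⊗[F] A} (hQT : IsQT F A R Ri) (a : A) :
    R * cop F A a = copOp F A a * R := by
  rw [← hQT.intw a, mul_assoc _ Ri, hQT.invMul, mul_one]

theorem IsTwistPair.flipT_mul_flipT_inv {R Ri J Ji : A ⊗[F] A} {ψ : A ≃ₐ[F] A}
    (hTP : IsTwistPair F A R Ri J Ji ψ) : flipT F A J * flipT F A Ji = 1 := by
  rw [← map_mul, hTP.mulInv, map_one]

theorem copOp_eq_of_cop_eq {R Ji : A ⊗[F] A} {ψ : A ≃ₐ[F] A} {K : A}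
    (hcop : cop F A K = Ji * (((1 : A) ⊗ₜ[F] K) * (rpsi F A R ψ * (K ⊗ₜ[F] (1 : A))))) :
    copOp F A K =
      flipT F A Ji * ((K ⊗ₜ[F] (1 : A)) * flipT F A (rpsi F A R ψ) * ((1 : A) ⊗ₜ[F] K)) := by
  rw [copOp_apply, hcop]
  simp only [map_mul, flipT_tmul, mul_assoc]

end ReflectionEquation

theorem statement0_general {F A : Type*} [Field F] [Ring A] [Bialgebra F A]
    (R Ri : A ⊗[F] A) (hQT : IsQT F A R Ri)
    (ψ : A ≃ₐ[F] A) (J Ji : A ⊗[F] A) (hTP : IsTwistPair F A R Ri J Ji ψ)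
    (K : A)
    (hcop : cop F A K = Ji * (((1 : A) ⊗ₜ[F] K) * (rpsi F A R ψ * (K ⊗ₜ[F] (1 : A))))) :
    (K ⊗ₜ[F] (1 : A)) * flipT F A (rpsi F A R ψ) * ((1 : A) ⊗ₜ[F] K) * R =
      flipT F A (mapT F A ψ.toAlgHom ψ.toAlgHom R) * ((1 : A) ⊗ₜ[F] K) *
        rpsi F A R ψ * (K ⊗ₜ[F] (1 : A)) := by
  have hRK := hQT.mul_cop K
  rw [hcop, copOp_eq_of_cop_eq hcop] at hRK
  calc (K ⊗ₜ[F] (1 : A)) * flipT F A (rpsi F A R ψ) * ((1 : A) ⊗ₜ[F] K) * R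
      = flipT F A J * (flipT F A Ji *
          ((K ⊗ₜ[F] (1 : A)) * flipT F A (rpsi F A R ψ) * ((1 : A) ⊗ₜ[F] K)) * R) := by
        rw [mul_assoc (flipT F A Ji), ← mul_assoc (flipT F A J), hTP.flipT_mul_flipT_inv, one_mul]
    _ = flipT F A J * (R * (Ji * (((1 : A) ⊗ₜ[F] K) * (rpsi F A R ψ * (K ⊗ₜ[F] (1 : A)))))) := by
        rw [hRK]
    _ = flipT F A (mapT F A ψ.toAlgHom ψ.toAlgHom R) * ((1 : A) ⊗ₜ[F] K) *
          rpsi F A R ψ * (K ⊗ₜ[F] (1 : A)) := by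
        rw [hTP.rrel]
        simp only [mul_assoc]

/-- the coproduct identity for a basic K-matrix implies the
generalized reflection equation. -/
theorem statement0 {F A : Type*} [Field F] [Ring A] [Bialgebra F A]
    (R Ri : A ⊗[F] A) (hQT : IsQT F A R Ri)
    (ψ : A ≃ₐ[F] A) (J Ji : A ⊗[F] A) (hTP : IsTwistPair F A R Ri J Ji ψ)
    (K Kinv : A) (hK1 : K * Kinv = 1) (hK2 : Kinv * K = 1)
    (hcop : cop F A K = Ji * (((1 : A) ⊗ₜ[F] K) * (rpsi F A R ψ * (K ⊗ₜ[F] (1 : A))))) :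
    (K ⊗ₜ[F] (1 : A)) * flipT F A (rpsi F A R ψ) * ((1 : A) ⊗ₜ[F] K) * R =
      flipT F A (mapT F A ψ.toAlgHom ψ.toAlgHom R) * ((1 : A) ⊗ₜ[F] K) *
        rpsi F A R ψ * (K ⊗ₜ[F] (1 : A)) :=
  statement0_general R Ri hQT ψ J Ji hTP K hcop

end
end

section
/- Let A be a quasitriangular bialgebra over a field F, B a right coideal subalgebra of A, and (ψ, J, K) a cylindrical structure on (A, B), with tensor K-matrix 𝕂 = (R^ψ)₂₁·(1⊗K)·R. Then (Δ⊗id)(𝕂) = (R^ψ)₃₂·𝕂₁₃·R₂₃ in A⊗A⊗A. -/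
open TensorProduct

noncomputable section

variable (F : Type*) [Field F]

/-!
Apply `Δ ⊗ id` to the three factors of `𝕂 = (R^ψ)₂₁ (1 ⊗ K) R` separately. Quasitriangularity
gives `R₁₃ R₂₃` for the last factor, and `1 ⊗ K` becomes `(1 ⊗ K)₁₃`. For the first factor,
`(Δ ⊗ id)(X₂₁)` is the cyclic rotation of `(id ⊗ Δ)(X)`; since `ψ` acts on the first leg only,
`(id ⊗ Δ)(R^ψ) = R^ψ₁₃ R^ψ₁₂`, which rotates to `(R^ψ)₃₂ (R^ψ)₃₁`. The middle three factors then
reassemble into `𝕂₁₃`.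
-/

section TensorKMatrix

variable {F A : Type*} [Field F] [Ring A] [Bialgebra F A]

/-- The cyclic permutation `a ⊗ (b ⊗ c) ↦ b ⊗ (c ⊗ a)` of the legs of `A ⊗ A ⊗ A`. -/
def rotLegs : (A ⊗[F] (A ⊗[F] A)) →ₐ[F] A ⊗[F] (A ⊗[F] A) :=
  (Algebra.TensorProduct.assoc F F F A A A).toAlgHom.comp
    (Algebra.TensorProduct.comm F A (A ⊗[F] A)).toAlgHom

theorem cop12_flipT (x : A ⊗[F] A) : cop12 F A (flipT F A x) = rotLegs (cop23 F A x) :=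
  TensorProduct.induction_on x (by simp) (fun a b => by simp [cop12, cop23, flipT, rotLegs])
    fun _ _ hx hy => by simp only [map_add, hx, hy]

theorem rotLegs_i13 (x : A ⊗[F] A) : rotLegs (i13 F A x) = i23 F A (flipT F A x) :=
  TensorProduct.induction_on x (by simp) (fun a b => by simp [i13, i23, flipT, rotLegs])
    fun _ _ hx hy => by simp only [map_add, hx, hy]

theorem rotLegs_i12 (x : A ⊗[F] A) : rotLegs (i12 F A x) = i13 F A (flipT F A x) :=
  TensorProduct.induction_on x (by simp) (fun a b => by simp [i12, i13, flipT, rotLegs])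
    fun _ _ hx hy => by simp only [map_add, hx, hy]

theorem cop23_map_id (φ : A →ₐ[F] A) (x : A ⊗[F] A) :
    cop23 F A (Algebra.TensorProduct.map φ (AlgHom.id F A) x) =
      Algebra.TensorProduct.map φ (AlgHom.id F (A ⊗[F] A)) (cop23 F A x) :=
  TensorProduct.induction_on x (by simp) (fun a b => by simp [cop23])
    fun _ _ hx hy => by simp only [map_add, hx, hy]

theorem map_id_i13 (φ : A →ₐ[F] A) (x : A ⊗[F] A) :
    Algebra.TensorProduct.map φ (AlgHom.id F (A ⊗[F] A)) (i13 F A x) =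
      i13 F A (Algebra.TensorProduct.map φ (AlgHom.id F A) x) :=
  TensorProduct.induction_on x (by simp) (fun a b => by simp [i13])
    fun _ _ hx hy => by simp only [map_add, hx, hy]

theorem map_id_i12 (φ : A →ₐ[F] A) (x : A ⊗[F] A) :
    Algebra.TensorProduct.map φ (AlgHom.id F (A ⊗[F] A)) (i12 F A x) =
      i12 F A (Algebra.TensorProduct.map φ (AlgHom.id F A) x) :=
  TensorProduct.induction_on x (by simp) (fun a b => by simp [i12])
    fun _ _ hx hy => by simp only [map_add, hx, hy]

theorem cop12_one_tmul (a : A) : cop12 F A ((1 : A) ⊗ₜ[F] a) = i13 F A ((1 : A) ⊗ₜ[F] a) := by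
  simp [cop12, i13, Algebra.TensorProduct.one_def]

theorem cop23_rpsi {R : A ⊗[F] A} (hR : cop23 F A R = i13 F A R * i12 F A R)
    (ψ : A ≃ₐ[F] A) :
    cop23 F A (rpsi F A R ψ) = i13 F A (rpsi F A R ψ) * i12 F A (rpsi F A R ψ) := by
  rw [rpsi, cop23_map_id, hR, map_mul, map_id_i13, map_id_i12]

theorem cop12_flipT_rpsi {R : A ⊗[F] A} (hR : cop23 F A R = i13 F A R * i12 F A R)
    (ψ : A ≃ₐ[F] A) :
    cop12 F A (flipT F A (rpsi F A R ψ)) =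
      i23 F A (flipT F A (rpsi F A R ψ)) * i13 F A (flipT F A (rpsi F A R ψ)) := by
  rw [cop12_flipT, cop23_rpsi hR, map_mul, rotLegs_i13, rotLegs_i12]

end TensorKMatrix

theorem statement4_general {F A : Type*} [Field F] [Ring A] [Bialgebra F A]
    (R Ri : A ⊗[F] A) (hQT : IsQT F A R Ri)
    (ψ : A ≃ₐ[F] A) (K : A) :
    cop12 F A (tenK F A R ψ K) =
      i23 F A (flipT F A (rpsi F A R ψ)) * i13 F A (tenK F A R ψ K) * i23 F A R := by
  simp only [tenK, map_mul, cop12_flipT_rpsi hQT.copR, cop12_one_tmul, hQT.copL, mul_assoc]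

/-- `(Δ ⊗ id)(𝕂) = (R^ψ)₃₂ ⬝ 𝕂₁₃ ⬝ R₂₃`. -/
theorem statement4 {F A : Type*} [Field F] [Ring A] [Bialgebra F A]
    (R Ri : A ⊗[F] A) (hQT : IsQT F A R Ri)
    (B : Subalgebra F A) (hB : IsRightCoideal F A B)
    (J Ji : A ⊗[F] A) (ψ : A ≃ₐ[F] A) (K Kinv : A)
    (hcyl : IsCylindrical F A R Ri B J Ji ψ K Kinv) :
    cop12 F A (tenK F A R ψ K) =
      i23 F A (flipT F A (rpsi F A R ψ)) * i13 F A (tenK F A R ψ K) * i23 F A R :=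
  statement4_general R Ri hQT ψ K

end
end

section
/- Let A be a quasitriangular bialgebra over a field F, B a right coideal subalgebra of A, and (ψ, J, K) a cylindrical structure on (A, B), with tensor K-matrix 𝕂 = (R^ψ)₂₁·(1⊗K)·R. Then (id⊗Δ)(𝕂) = (J⁻¹)₂₃·𝕂₁₃·(R^ψ)₂₃·𝕂₁₂ in A⊗A⊗A. Moreover (ε⊗id)(𝕂) = K. -/
open TensorProduct

noncomputable section

variable (F : Type*) [Field F]

/-! Expanding `(id ⊗ Δ)(𝕂) = (id ⊗ Δ)((R^ψ)₂₁) ⬝ (1 ⊗ Δ(K)) ⬝ R₁₃ R₁₂`, the twist-pair axioms give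
`(id ⊗ Δ)((R^ψ)₂₁) = (J⁻¹)₂₃ ((R^ψ)₂₁)₁₃ ((R^ψ)₂₁)₁₂ J₂₃`, and the formula for `Δ(K)` cancels the
`J₂₃`. After moving `1 ⊗ 1 ⊗ K` and `1 ⊗ K ⊗ 1` past factors living on other legs, what remains is
to reverse `((R^ψ)₂₁)₁₂ (R^ψ)₂₃ R₁₃`: this is the Yang–Baxter equation transported by
`a ⊗ b ⊗ c ↦ b ⊗ ψ a ⊗ c`. The counit identity holds because `(ε ⊗ id)(R) = 1 = (id ⊗ ε)(R)`. -/

section TripleTensors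

variable {F} {A : Type*} [Ring A] [Bialgebra F A]

local notation "α" => Algebra.TensorProduct.assoc F F F A A A
local notation "σ₁₂" => Algebra.TensorProduct.leftComm F A A A

lemma i12_eq_assoc (X : A ⊗[F] A) : i12 F A X = α (X ⊗ₜ 1) := by
  induction X using TensorProduct.induction_on with
  | zero => simp
  | tmul a b => simp [i12]
  | add x y hx hy => simp [hx, hy, TensorProduct.add_tmul]

lemma cop12_tmul (a b : A) : cop12 F A (a ⊗ₜ b) = α (cop F A a ⊗ₜ b) := rfl

lemma leftComm_assoc (u : A ⊗[F] A) (b : A) : σ₁₂ (α (u ⊗ₜ b)) = α (flipT F A u ⊗ₜ b) := by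
  induction u using TensorProduct.induction_on with
  | zero => simp
  | tmul x y => simp [flipT]
  | add x y hx hy => simp [hx, hy, TensorProduct.add_tmul]

lemma leftComm_i13 (X : A ⊗[F] A) : σ₁₂ (i13 F A X) = i23 F A X := by
  induction X using TensorProduct.induction_on with
  | zero => simp
  | tmul a b => simp [i13, i23]
  | add x y hx hy => simp [hx, hy]

lemma leftComm_i23 (X : A ⊗[F] A) : σ₁₂ (i23 F A X) = i13 F A X := by
  induction X using TensorProduct.induction_on with
  | zero => simp
  | tmul a b => simp [i13, i23]
  | add x y hx hy => simp [hx, hy]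

lemma leftComm_cop12 {R Ri : A ⊗[F] A} (hR : ∀ a : A, R * cop F A a * Ri = copOp F A a)
    (X : A ⊗[F] A) : σ₁₂ (cop12 F A X) = i12 F A R * cop12 F A X * i12 F A Ri := by
  induction X using TensorProduct.induction_on with
  | zero => simp
  | tmul a b =>
    rw [cop12_tmul, leftComm_assoc, i12_eq_assoc, i12_eq_assoc, ← map_mul, ← map_mul,
      Algebra.TensorProduct.tmul_mul_tmul, Algebra.TensorProduct.tmul_mul_tmul, one_mul, mul_one,
      hR]
    rfl
  | add x y hx hy => simp [hx, hy, mul_add, add_mul]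

lemma IsQT.yang_baxter {R Ri : A ⊗[F] A} (hQT : IsQT F A R Ri) :
    i12 F A R * i13 F A R * i23 F A R = i23 F A R * i13 F A R * i12 F A R := by
  have h := leftComm_cop12 hQT.intw R
  rw [hQT.copL, map_mul, leftComm_i13, leftComm_i23] at h
  rw [h, mul_assoc _ (i12 F A Ri), ← map_mul, hQT.invMul, map_one, mul_one, mul_assoc]

/-- `a ⊗ b ⊗ c ↦ b ⊗ ψ a ⊗ c`. -/
def flipPsi12 (ψ : A ≃ₐ[F] A) : A ⊗[F] (A ⊗[F] A) →ₐ[F] A ⊗[F] (A ⊗[F] A) :=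
  (Algebra.TensorProduct.map (AlgHom.id F A)
    (Algebra.TensorProduct.map ψ.toAlgHom (AlgHom.id F A))).comp (σ₁₂).toAlgHom

lemma flipPsi12_i12 (ψ : A ≃ₐ[F] A) (X : A ⊗[F] A) :
    flipPsi12 ψ (i12 F A X) = i12 F A (flipT F A (rpsi F A X ψ)) := by
  induction X using TensorProduct.induction_on with
  | zero => simp [rpsi]
  | tmul a b => simp [flipPsi12, i12, rpsi, flipT]
  | add x y hx hy => simp_all [rpsi]

lemma flipPsi12_i13 (ψ : A ≃ₐ[F] A) (X : A ⊗[F] A) :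
    flipPsi12 ψ (i13 F A X) = i23 F A (rpsi F A X ψ) := by
  induction X using TensorProduct.induction_on with
  | zero => simp [rpsi]
  | tmul a b => simp [flipPsi12, i13, i23, rpsi]
  | add x y hx hy => simp_all [rpsi]

lemma flipPsi12_i23 (ψ : A ≃ₐ[F] A) (X : A ⊗[F] A) :
    flipPsi12 ψ (i23 F A X) = i13 F A X := by
  induction X using TensorProduct.induction_on with
  | zero => simp
  | tmul a b => simp [flipPsi12, i13, i23]
  | add x y hx hy => simp_all

lemma IsQT.twisted_yang_baxter {R Ri : A ⊗[F] A} (hQT : IsQT F A R Ri) (ψ : A ≃ₐ[F] A) :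
    i12 F A (flipT F A (rpsi F A R ψ)) * i23 F A (rpsi F A R ψ) * i13 F A R =
      i13 F A R * i23 F A (rpsi F A R ψ) * i12 F A (flipT F A (rpsi F A R ψ)) := by
  simpa only [map_mul, flipPsi12_i12, flipPsi12_i13, flipPsi12_i23] using
    congrArg (flipPsi12 ψ) hQT.yang_baxter

/-- `a ⊗ b ⊗ c ↦ c ⊗ ψ b ⊗ ψ a`. -/
def reverseLegsPsi (ψ : A ≃ₐ[F] A) : A ⊗[F] (A ⊗[F] A) →ₐ[F] A ⊗[F] (A ⊗[F] A) :=
  (Algebra.TensorProduct.map (AlgHom.id F A)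
    ((mapT F A ψ.toAlgHom ψ.toAlgHom).comp (flipT F A).toAlgHom)).comp
    ((Algebra.TensorProduct.comm F (A ⊗[F] A) A).toAlgHom.comp (α).symm.toAlgHom)

lemma reverseLegsPsi_assoc (ψ : A ≃ₐ[F] A) (u : A ⊗[F] A) (b : A) :
    reverseLegsPsi ψ (α (u ⊗ₜ b)) = b ⊗ₜ mapT F A ψ.toAlgHom ψ.toAlgHom (flipT F A u) := by
  simp [reverseLegsPsi]

lemma reverseLegsPsi_i13 (ψ : A ≃ₐ[F] A) (X : A ⊗[F] A) :
    reverseLegsPsi ψ (i13 F A X) = i13 F A (flipT F A (rpsi F A X ψ)) := by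
  induction X using TensorProduct.induction_on with
  | zero => simp [rpsi]
  | tmul a b => simp [reverseLegsPsi, i13, rpsi, flipT, mapT]
  | add x y hx hy => simp_all [rpsi]

lemma reverseLegsPsi_i23 (ψ : A ≃ₐ[F] A) (X : A ⊗[F] A) :
    reverseLegsPsi ψ (i23 F A X) = i12 F A (flipT F A (rpsi F A X ψ)) := by
  induction X using TensorProduct.induction_on with
  | zero => simp [rpsi]
  | tmul a b => simp [reverseLegsPsi, i12, i23, rpsi, flipT, mapT]
  | add x y hx hy => simp_all [rpsi]

lemma IsTwistPair.cop23_flipT_rpsi {R Ri J Ji : A ⊗[F] A} {ψ : A ≃ₐ[F] A}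
    (hT : IsTwistPair F A R Ri J Ji ψ) (X : A ⊗[F] A) :
    cop23 F A (flipT F A (rpsi F A X ψ)) =
      i23 F A Ji * reverseLegsPsi ψ (cop12 F A X) * i23 F A J := by
  induction X using TensorProduct.induction_on with
  | zero => simp [rpsi]
  | tmul a b =>
    have hcop : mapT F A ψ.toAlgHom ψ.toAlgHom (flipT F A (cop F A a)) =
        J * cop F A (ψ a) * Ji := by
      have h := hT.intw (ψ a)
      rwa [AlgEquiv.symm_apply_apply] at h
    rw [cop12_tmul, reverseLegsPsi_assoc, hcop]
    simp only [i23, Algebra.TensorProduct.includeRight_apply, Algebra.TensorProduct.tmul_mul_tmul,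
      one_mul, mul_one]
    rw [← mul_assoc, ← mul_assoc, hT.invMul, one_mul, mul_assoc, hT.invMul, mul_one]
    simp [cop23, rpsi, flipT]
  | add x y hx hy => simp_all [rpsi, mul_add, add_mul]

lemma cop23_flipT_rpsi_R {R Ri J Ji : A ⊗[F] A} {ψ : A ≃ₐ[F] A} (hQT : IsQT F A R Ri)
    (hT : IsTwistPair F A R Ri J Ji ψ) :
    cop23 F A (flipT F A (rpsi F A R ψ)) =
      i23 F A Ji * (i13 F A (flipT F A (rpsi F A R ψ)) * i12 F A (flipT F A (rpsi F A R ψ))) *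
        i23 F A J := by
  rw [hT.cop23_flipT_rpsi, hQT.copL, map_mul, reverseLegsPsi_i13, reverseLegsPsi_i23]

lemma i13_one_tmul (k : A) : i13 F A (1 ⊗ₜ k) = i23 F A (1 ⊗ₜ k) := by
  simp [i13, i23]

lemma i12_one_tmul (k : A) : i12 F A (1 ⊗ₜ k) = i23 F A (k ⊗ₜ 1) := by
  simp [i12, i23]

lemma commute_i12_i23_one_tmul (X : A ⊗[F] A) (k : A) :
    Commute (i12 F A X) (i23 F A (1 ⊗ₜ k)) := by
  induction X using TensorProduct.induction_on with
  | zero => simp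
  | tmul a b => simp [Commute, SemiconjBy, i12, i23]
  | add x y hx hy => simpa using hx.add_left hy

lemma commute_i13_i23_tmul_one (X : A ⊗[F] A) (k : A) :
    Commute (i13 F A X) (i23 F A (k ⊗ₜ 1)) := by
  induction X using TensorProduct.induction_on with
  | zero => simp
  | tmul a b => simp [Commute, SemiconjBy, i13, i23]
  | add x y hx hy => simpa using hx.add_left hy

lemma cop23_tenK {R Ri J Ji : A ⊗[F] A} {ψ : A ≃ₐ[F] A} {K : A} (hQT : IsQT F A R Ri)
    (hT : IsTwistPair F A R Ri J Ji ψ)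
    (hK : cop F A K = Ji * ((1 ⊗ₜ K) * (rpsi F A R ψ * (K ⊗ₜ 1)))) :
    cop23 F A (tenK F A R ψ K) =
      i23 F A Ji * i13 F A (tenK F A R ψ K) * i23 F A (rpsi F A R ψ) *
        i12 F A (tenK F A R ψ K) := by
  have hK23 : cop23 F A (1 ⊗ₜ K) = i23 F A (cop F A K) := by simp [cop23, i23]
  have hJ : ∀ x, i23 F A J * (i23 F A Ji * x) = x := fun x => by
    rw [← mul_assoc, ← map_mul, hT.mulInv, map_one, one_mul]
  simp only [tenK, map_mul, hK23, hK, cop23_flipT_rpsi_R hQT hT, hQT.copR, i13_one_tmul,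
    i12_one_tmul, mul_assoc, hJ]
  have hYB : ∀ x, i12 F A (flipT F A (rpsi F A R ψ)) * (i23 F A (rpsi F A R ψ) * (i13 F A R * x)) =
      i13 F A R * (i23 F A (rpsi F A R ψ) * (i12 F A (flipT F A (rpsi F A R ψ)) * x)) :=
    fun x => by simp only [← mul_assoc, hQT.twisted_yang_baxter]
  rw [(commute_i12_i23_one_tmul (flipT F A (rpsi F A R ψ)) K).left_comm,
    ← (commute_i13_i23_tmul_one R K).left_comm, hYB]

@[simp] lemma counit2l_tmul (a b : A) :
    counit2l F A (a ⊗ₜ b) = Coalgebra.counit (R := F) a • b := by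
  simp [counit2l]

@[simp] lemma counit2r_tmul (a b : A) :
    counit2r F A (a ⊗ₜ b) = Coalgebra.counit (R := F) b • a := by
  simp [counit2r]

lemma counit2l_cop (a : A) : counit2l F A (cop F A a) = a := by
  have h := congrArg (TensorProduct.lid F A) (Coalgebra.rTensor_counit_comul (R := F) a)
  rwa [TensorProduct.lid_tmul, one_smul] at h

lemma counit2r_cop (a : A) : counit2r F A (cop F A a) = a := by
  have h := congrArg (TensorProduct.rid F A) (Coalgebra.lTensor_counit_comul (R := F) a)
  rwa [TensorProduct.rid_tmul, one_smul] at h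

def counitLeft3 : A ⊗[F] (A ⊗[F] A) →ₐ[F] A ⊗[F] A :=
  (Algebra.TensorProduct.lid F (A ⊗[F] A)).toAlgHom.comp
    (Algebra.TensorProduct.map (Bialgebra.counitAlgHom F A) (AlgHom.id F (A ⊗[F] A)))

def counitRight3 : A ⊗[F] (A ⊗[F] A) →ₐ[F] A ⊗[F] A :=
  Algebra.TensorProduct.map (AlgHom.id F A) (counit2r F A)

lemma counitLeft3_assoc (u : A ⊗[F] A) (b : A) :
    counitLeft3 (α (u ⊗ₜ b)) = counit2l F A u ⊗ₜ b := by
  induction u using TensorProduct.induction_on with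
  | zero => simp
  | tmul x y => simp [counitLeft3, TensorProduct.smul_tmul']
  | add x y hx hy => simp_all [TensorProduct.add_tmul]

lemma counitLeft3_cop12 (X : A ⊗[F] A) : counitLeft3 (cop12 F A X) = X := by
  induction X using TensorProduct.induction_on with
  | zero => simp
  | tmul a b => rw [cop12_tmul, counitLeft3_assoc, counit2l_cop]
  | add x y hx hy => simp_all

lemma counitLeft3_i13 (X : A ⊗[F] A) : counitLeft3 (i13 F A X) = 1 ⊗ₜ counit2l F A X := by
  induction X using TensorProduct.induction_on with
  | zero => simp
  | tmul a b => simp [counitLeft3, i13, TensorProduct.tmul_smul]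
  | add x y hx hy => simp_all [TensorProduct.tmul_add]

lemma counitLeft3_i23 (X : A ⊗[F] A) : counitLeft3 (i23 F A X) = X := by
  simp [counitLeft3, i23]

lemma counitRight3_cop23 (X : A ⊗[F] A) : counitRight3 (cop23 F A X) = X := by
  induction X using TensorProduct.induction_on with
  | zero => simp
  | tmul a b => simp [counitRight3, cop23, counit2r_cop]
  | add x y hx hy => simp_all

lemma counitRight3_i13 (X : A ⊗[F] A) : counitRight3 (i13 F A X) = counit2r F A X ⊗ₜ 1 := by
  induction X using TensorProduct.induction_on with
  | zero => simp
  | tmul a b => simp [counitRight3, i13, TensorProduct.smul_tmul']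
  | add x y hx hy => simp_all [TensorProduct.add_tmul]

lemma counitRight3_i12 (X : A ⊗[F] A) : counitRight3 (i12 F A X) = X := by
  induction X using TensorProduct.induction_on with
  | zero => simp
  | tmul a b => simp [counitRight3, i12]
  | add x y hx hy => simp_all

lemma IsQT.counit2l_eq_one {R Ri : A ⊗[F] A} (hQT : IsQT F A R Ri) : counit2l F A R = 1 := by
  have h := congrArg counitLeft3 hQT.copL
  rw [counitLeft3_cop12, map_mul, counitLeft3_i13, counitLeft3_i23] at h
  have h1 : (1 : A ⊗[F] A) = 1 ⊗ₜ counit2l F A R := by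
    simpa only [mul_assoc, hQT.mulInv, mul_one] using congrArg (· * Ri) h
  simpa using (congrArg (counit2l F A) h1).symm

lemma IsQT.counit2r_eq_one {R Ri : A ⊗[F] A} (hQT : IsQT F A R Ri) : counit2r F A R = 1 := by
  have h := congrArg counitRight3 hQT.copR
  rw [counitRight3_cop23, map_mul, counitRight3_i13, counitRight3_i12] at h
  have h1 : (1 : A ⊗[F] A) = counit2r F A R ⊗ₜ 1 := by
    simpa only [mul_assoc, hQT.mulInv, mul_one] using congrArg (· * Ri) h
  simpa using (congrArg (counit2r F A) h1).symm

lemma counit2l_flipT (X : A ⊗[F] A) : counit2l F A (flipT F A X) = counit2r F A X := by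
  induction X using TensorProduct.induction_on with
  | zero => simp
  | tmul a b => simp [flipT]
  | add x y hx hy => simp_all

lemma counit2r_rpsi (ψ : A ≃ₐ[F] A) (X : A ⊗[F] A) :
    counit2r F A (rpsi F A X ψ) = ψ (counit2r F A X) := by
  induction X using TensorProduct.induction_on with
  | zero => simp [rpsi]
  | tmul a b => simp [rpsi]
  | add x y hx hy => simp_all [rpsi]

lemma IsQT.counit2l_tenK {R Ri : A ⊗[F] A} (hQT : IsQT F A R Ri) (ψ : A ≃ₐ[F] A) (K : A) :
    counit2l F A (tenK F A R ψ K) = K := by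
  simp [tenK, counit2l_flipT, counit2r_rpsi, hQT.counit2l_eq_one, hQT.counit2r_eq_one]

end TripleTensors

theorem statement5_general {F A : Type*} [Field F] [Ring A] [Bialgebra F A]
    (R Ri : A ⊗[F] A) (hQT : IsQT F A R Ri)
    (B : Subalgebra F A)
    (J Ji : A ⊗[F] A) (ψ : A ≃ₐ[F] A) (K Kinv : A)
    (hcyl : IsCylindrical F A R Ri B J Ji ψ K Kinv) :
    cop23 F A (tenK F A R ψ K) =
      i23 F A Ji * i13 F A (tenK F A R ψ K) * i23 F A (rpsi F A R ψ) *
        i12 F A (tenK F A R ψ K) ∧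
    counit2l F A (tenK F A R ψ K) = K :=
  ⟨cop23_tenK hQT hcyl.twist hcyl.copK, hQT.counit2l_tenK ψ K⟩

/-- `(id ⊗ Δ)(𝕂) = (J⁻¹)₂₃ ⬝ 𝕂₁₃ ⬝ (R^ψ)₂₃ ⬝ 𝕂₁₂` and `(ε ⊗ id)(𝕂) = K`. -/
theorem statement5 {F A : Type*} [Field F] [Ring A] [Bialgebra F A]
    (R Ri : A ⊗[F] A) (hQT : IsQT F A R Ri)
    (B : Subalgebra F A) (hB : IsRightCoideal F A B)
    (J Ji : A ⊗[F] A) (ψ : A ≃ₐ[F] A) (K Kinv : A)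
    (hcyl : IsCylindrical F A R Ri B J Ji ψ K Kinv) :
    cop23 F A (tenK F A R ψ K) =
      i23 F A Ji * i13 F A (tenK F A R ψ K) * i23 F A (rpsi F A R ψ) *
        i12 F A (tenK F A R ψ K) ∧
    counit2l F A (tenK F A R ψ K) = K :=
  statement5_general R Ri hQT B J Ji ψ K Kinv hcyl

end
end

section
/- Let A be a Hopf algebra over a field F with bijective antipode S, quasitriangular with R-matrix R, and let D be a sovereign element of A. Then for every pair of finite-dimensional A-modules V and W, the partial transpose ((R_{V,W})⁻¹)^{t₂} is invertible in End_F(V)⊗End_F(W^∨), and ((((R_{V,W})⁻¹)^{t₂})⁻¹)^{t₂} = ((1⊗D⁻¹)·R·(1⊗D))_{V,W}, under the canonical identification End_F(W^∨∨) ≅ End_F(W). -/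
/-!
Contracting the last two legs of `(id ⊗ Δ)(R) = R₁₃ R₁₂` with `p ⊗ q ↦ q · S⁻¹(p)` turns the
left side into `(id ⊗ ε)(R) = 1` and the right side into `R · (id ⊗ S⁻¹)(R)`, so
`R⁻¹ = (id ⊗ S⁻¹)(R)`. As `D⁻¹ (-) D = S⁻²`, also
`(1 ⊗ D⁻¹) R (1 ⊗ D) = (id ⊗ S⁻²)(R) = (id ⊗ S⁻¹)(R⁻¹)`.
Partial transposition sends `(ρ_V ⊗ ρ_W)((id ⊗ S⁻¹) X)` to `(ρ_V ⊗ ρ_W^∨)(X)`, where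
`ρ_W^∨(a) = ρ_W(S⁻¹ a)ᵗ` is again an algebra map. Hence `((R⁻¹)_{V,W})^{t₂}` is the image of `R`
under an algebra map, with inverse the image of `R⁻¹`, which is
`(((1 ⊗ D⁻¹) R (1 ⊗ D))_{V,W})^{t₂}`; transposing twice gives back the original matrix.
-/

open TensorProduct

noncomputable section

variable (F : Type*) [Field F]

namespace HopfAlgebra

variable {R A : Type*} [CommSemiring R] [Semiring A] [HopfAlgebra R A]

def antipodeEquiv (hS : Function.Bijective (antipode R (A := A))) : A ≃ₗ[R] A :=
  LinearEquiv.ofBijective (antipode R) hS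

variable (hS : Function.Bijective (antipode R (A := A)))

@[simp]
lemma antipode_antipodeEquiv_symm (a : A) : antipode R ((antipodeEquiv hS).symm a) = a :=
  (antipodeEquiv hS).apply_symm_apply a

lemma antipodeEquiv_symm_one : (antipodeEquiv hS).symm (1 : A) = 1 :=
  hS.injective (by simp)

lemma antipodeEquiv_symm_mul (a b : A) :
    (antipodeEquiv hS).symm (a * b) = (antipodeEquiv hS).symm b * (antipodeEquiv hS).symm a :=
  hS.injective (by simp [antipode_mul_antidistrib])

lemma inv_mul_mul_eq_antipodeEquiv_symm_symm {D Di : A} (hD : Di * D = 1)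
    (hDS : ∀ a : A, D * a * Di = antipode R (antipode R a)) (b : A) :
    Di * b * D = (antipodeEquiv hS).symm ((antipodeEquiv hS).symm b) := by
  set c := (antipodeEquiv hS).symm ((antipodeEquiv hS).symm b)
  have hb : b = D * c * Di := by simp [c, hDS]
  rw [hb]
  simp only [mul_assoc, hD, mul_one]
  rw [← mul_assoc, hD, one_mul]

def dualRep {W : Type*} [AddCommMonoid W] [Module R W] (ρ : A →ₐ[R] Module.End R W) :
    A →ₐ[R] Module.End R (Module.Dual R W) :=
  AlgHom.ofLinearMap
    (Module.Dual.transpose ∘ₗ ρ.toLinearMap ∘ₗ (antipodeEquiv hS).symm.toLinearMap)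
    (by ext; simp [antipodeEquiv_symm_one, Module.Dual.transpose_apply])
    (fun a b => by
      simp [antipodeEquiv_symm_mul, Module.End.mul_eq_comp, Module.Dual.transpose_comp])

@[simp]
lemma dualRep_apply {W : Type*} [AddCommMonoid W] [Module R W] (ρ : A →ₐ[R] Module.End R W)
    (a : A) : dualRep hS ρ a = Module.Dual.transpose (ρ ((antipodeEquiv hS).symm a)) :=
  rfl

end HopfAlgebra

open HopfAlgebra

section LegContraction

variable {R A : Type*} [CommSemiring R] [Semiring A]

def mulFlip [Algebra R A] (φ : A →ₗ[R] A) : A ⊗[R] A →ₗ[R] A :=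
  LinearMap.mul' R A ∘ₗ φ.lTensor A ∘ₗ (TensorProduct.comm R A A).toLinearMap

@[simp]
lemma mulFlip_tmul [Algebra R A] (φ : A →ₗ[R] A) (p q : A) :
    mulFlip φ (p ⊗ₜ q) = q * φ p := by
  simp [mulFlip]

lemma mulFlip_counit_comp_comul [Bialgebra R A] :
    mulFlip (Algebra.linearMap R A ∘ₗ Coalgebra.counit) ∘ₗ Coalgebra.comul =
      (LinearMap.id : A →ₗ[R] A) := by
  have h : mulFlip (Algebra.linearMap R A ∘ₗ Coalgebra.counit) =
      (TensorProduct.lid R A).toLinearMap ∘ₗ Coalgebra.counit.rTensor A := by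
    ext p q
    simp [Algebra.smul_def, Algebra.commutes]
  ext a
  simp [h, Coalgebra.rTensor_counit_comul]

lemma mulFlip_antipodeEquiv_symm_comp_comul [HopfAlgebra R A]
    (hS : Function.Bijective (antipode R (A := A))) :
    mulFlip (antipodeEquiv hS).symm.toLinearMap ∘ₗ Coalgebra.comul =
      Algebra.linearMap R A ∘ₗ Coalgebra.counit := by
  have h : antipode R ∘ₗ mulFlip (antipodeEquiv hS).symm.toLinearMap =
      LinearMap.mul' R A ∘ₗ (antipode R).lTensor A := by
    ext p q
    simp [antipode_mul_antidistrib]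
  ext a
  apply hS.injective
  simpa [Algebra.algebraMap_eq_smul_one] using congr($h (Coalgebra.comul a))

lemma one_tmul_mul_mul_one_tmul [Algebra R A] {x y : A} {θ : A →ₗ[R] A}
    (h : ∀ b, x * b * y = θ b) (u : A ⊗[R] A) :
    ((1 : A) ⊗ₜ[R] x) * u * ((1 : A) ⊗ₜ[R] y) = θ.lTensor A u := by
  induction u using TensorProduct.induction_on with
  | zero => simp
  | tmul a b => simp [Algebra.TensorProduct.tmul_mul_tmul, h]
  | add u v hu hv => simp only [map_add, mul_add, add_mul, hu, hv]

end LegContraction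

variable {F}

section Quasitriangular

variable {A : Type*} [Ring A] [Bialgebra F A]

lemma lTensor_mulFlip_cop23 {φ ψ : A →ₗ[F] A} (h : mulFlip φ ∘ₗ Coalgebra.comul = ψ)
    (u : A ⊗[F] A) : (mulFlip φ).lTensor A (cop23 F A u) = ψ.lTensor A u := by
  induction u using TensorProduct.induction_on with
  | zero => simp
  | tmul a b => simp [cop23, cop, ← h]
  | add u v hu hv => simp only [map_add, hu, hv]

lemma lTensor_mulFlip_i13_mul_i12 (φ : A →ₗ[F] A) (u v : A ⊗[F] A) :
    (mulFlip φ).lTensor A (i13 F A u * i12 F A v) = u * φ.lTensor A v := by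
  induction u using TensorProduct.induction_on with
  | zero => simp
  | add u u' hu hu' => simp only [map_add, add_mul, hu, hu']
  | tmul a c =>
    induction v using TensorProduct.induction_on with
    | zero => simp
    | add v v' hv hv' => simp only [map_add, mul_add, hv, hv']
    | tmul b d => simp [i13, i12, Algebra.TensorProduct.tmul_mul_tmul]

namespace IsQT

variable {R Ri : A ⊗[F] A}

lemma lTensor_eq_mul_lTensor (hQT : IsQT F A R Ri) {φ ψ : A →ₗ[F] A}
    (h : mulFlip φ ∘ₗ Coalgebra.comul = ψ) : ψ.lTensor A R = R * φ.lTensor A R := by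
  simpa [lTensor_mulFlip_cop23 h, lTensor_mulFlip_i13_mul_i12] using
    congr((mulFlip φ).lTensor A $hQT.copR)

lemma lTensor_counit (hQT : IsQT F A R Ri) :
    (Algebra.linearMap F A ∘ₗ Coalgebra.counit).lTensor A R = 1 := by
  have h := hQT.lTensor_eq_mul_lTensor mulFlip_counit_comp_comul
  rw [LinearMap.lTensor_id, LinearMap.id_apply] at h
  calc _ = Ri * R * (Algebra.linearMap F A ∘ₗ Coalgebra.counit).lTensor A R := by
        rw [hQT.invMul, one_mul]
    _ = 1 := by rw [mul_assoc, ← h, hQT.invMul]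

end IsQT

end Quasitriangular

section Hopf

variable {A : Type*} [Ring A] [HopfAlgebra F A]
  (hS : Function.Bijective (antipode F (A := A)))

lemma IsQT.inv_eq_lTensor_antipodeEquiv_symm {R Ri : A ⊗[F] A} (hQT : IsQT F A R Ri) :
    Ri = (antipodeEquiv hS).symm.toLinearMap.lTensor A R := by
  have h := hQT.lTensor_eq_mul_lTensor (mulFlip_antipodeEquiv_symm_comp_comul hS)
  rw [hQT.lTensor_counit] at h
  calc Ri = Ri * (R * (antipodeEquiv hS).symm.toLinearMap.lTensor A R) := by rw [← h, mul_one]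
    _ = _ := by rw [← mul_assoc, hQT.invMul, one_mul]

lemma pt2_map_lTensor_antipodeEquiv_symm {V W : Type*} [AddCommGroup V] [Module F V]
    [AddCommGroup W] [Module F W] (ρV : A →ₐ[F] Module.End F V) (ρW : A →ₐ[F] Module.End F W)
    (u : A ⊗[F] A) :
    pt2 F V W (Algebra.TensorProduct.map ρV ρW
        ((antipodeEquiv hS).symm.toLinearMap.lTensor A u)) =
      Algebra.TensorProduct.map ρV (dualRep hS ρW) u := by
  induction u using TensorProduct.induction_on with
  | zero => simp
  | tmul a b => simp [pt2]
  | add u v hu hv => simp only [map_add, hu, hv]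

end Hopf

lemma evalEquiv_conj_symm_transpose_transpose {W : Type*} [AddCommGroup W] [Module F W]
    [FiniteDimensional F W] (g : Module.End F W) :
    (Module.evalEquiv F W).conj.symm (Module.Dual.transpose (Module.Dual.transpose g)) = g := by
  rw [LinearEquiv.symm_apply_eq, LinearEquiv.conj_apply]
  ext φ ψ
  exact (Module.apply_evalEquiv_symm_apply F W (ψ ∘ₗ g) φ).symm

lemma ddIdent_pt2_pt2 {V W : Type*} [AddCommGroup V] [Module F V] [AddCommGroup W] [Module F W]
    [FiniteDimensional F W] (Y : Module.End F V ⊗[F] Module.End F W) :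
    ddIdent F V W (pt2 F V (Module.Dual F W) (pt2 F V W Y)) = Y := by
  induction Y using TensorProduct.induction_on with
  | zero => simp
  | tmul f g => simp [pt2, ddIdent, evalEquiv_conj_symm_transpose_transpose]
  | add u v hu hv => simp only [map_add, hu, hv]

theorem statement10_general {F A : Type*} [Field F] [Ring A] [HopfAlgebra F A]
    (hS : Function.Bijective (HopfAlgebra.antipode (R := F) (A := A)))
    (R Ri : A ⊗[F] A) (hQT : IsQT F A R Ri)
    (D Di : A) (hD2 : Di * D = 1)
    (hDS : ∀ a : A, D * a * Di =
      HopfAlgebra.antipode (R := F) (HopfAlgebra.antipode (R := F) a))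
    (V W : Type) [AddCommGroup V] [Module F V]
    [AddCommGroup W] [Module F W] [FiniteDimensional F W]
    (ρV : A →ₐ[F] Module.End F V) (ρW : A →ₐ[F] Module.End F W) :
    IsUnit (pt2 F V W ((Algebra.TensorProduct.map ρV ρW) Ri)) ∧
    ddIdent F V W (pt2 F V (Module.Dual F W)
        (Ring.inverse (pt2 F V W ((Algebra.TensorProduct.map ρV ρW) Ri)))) =
      (Algebra.TensorProduct.map ρV ρW) (((1 : A) ⊗ₜ[F] Di) * R * ((1 : A) ⊗ₜ[F] D)) := by
  set Sinv := (antipodeEquiv hS).symm.toLinearMap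
  set Λ := Algebra.TensorProduct.map ρV (dualRep hS ρW)
  have hRi : Ri = Sinv.lTensor A R := hQT.inv_eq_lTensor_antipodeEquiv_symm hS
  have hX : ((1 : A) ⊗ₜ[F] Di) * R * ((1 : A) ⊗ₜ[F] D) = Sinv.lTensor A Ri := by
    rw [one_tmul_mul_mul_one_tmul (θ := Sinv ∘ₗ Sinv)
      (inv_mul_mul_eq_antipodeEquiv_symm_symm hS hD2 hDS), hRi, LinearMap.lTensor_comp_apply]
  have hRi_pt2 : pt2 F V W (Algebra.TensorProduct.map ρV ρW Ri) = Λ R := by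
    rw [hRi, pt2_map_lTensor_antipodeEquiv_symm]
  have hX_pt2 : pt2 F V W (Algebra.TensorProduct.map ρV ρW
      (((1 : A) ⊗ₜ[F] Di) * R * ((1 : A) ⊗ₜ[F] D))) = Λ Ri := by
    rw [hX, pt2_map_lTensor_antipodeEquiv_symm]
  let u : (A ⊗[F] A)ˣ := ⟨R, Ri, hQT.mulInv, hQT.invMul⟩
  have hinv : Ring.inverse (Λ R) = Λ Ri := Ring.inverse_unit (u.map Λ.toMonoidHom)
  refine ⟨hRi_pt2 ▸ (u.map Λ.toMonoidHom).isUnit, ?_⟩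
  rw [hRi_pt2, hinv, ← hX_pt2, ddIdent_pt2_pt2]

/-- crossing symmetry for a sovereign quasitriangular Hopf algebra:
`((((R_{V,W})⁻¹)^{t₂})⁻¹)^{t₂} = ((1 ⊗ D⁻¹) ⬝ R ⬝ (1 ⊗ D))_{V,W}`. -/
theorem statement10 {F A : Type*} [Field F] [Ring A] [HopfAlgebra F A]
    (hS : Function.Bijective (HopfAlgebra.antipode (R := F) (A := A)))
    (R Ri : A ⊗[F] A) (hQT : IsQT F A R Ri)
    (D Di : A) (hD1 : D * Di = 1) (hD2 : Di * D = 1)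
    (hDgl : cop F A D = D ⊗ₜ[F] D) (hDe : Bialgebra.counitAlgHom F A D = 1)
    (hDS : ∀ a : A, D * a * Di =
      HopfAlgebra.antipode (R := F) (HopfAlgebra.antipode (R := F) a))
    (V W : Type) [AddCommGroup V] [Module F V] [FiniteDimensional F V]
    [AddCommGroup W] [Module F W] [FiniteDimensional F W]
    (ρV : A →ₐ[F] Module.End F V) (ρW : A →ₐ[F] Module.End F W) :
    IsUnit (pt2 F V W ((Algebra.TensorProduct.map ρV ρW) Ri)) ∧
    ddIdent F V W (pt2 F V (Module.Dual F W)
        (Ring.inverse (pt2 F V W ((Algebra.TensorProduct.map ρV ρW) Ri)))) =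
      (Algebra.TensorProduct.map ρV ρW) (((1 : A) ⊗ₜ[F] Di) * R * ((1 : A) ⊗ₜ[F] D)) :=
  statement10_general hS R Ri hQT D Di hD2 hDS V W ρV ρW

end
end
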